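/- Ptolemy characterization of cocyclicity: let a,b,c,e ∈ ℍ be points that are not collinear, and set Δ₁ := S_ac·S_be − S_ae·S_bc − S_ab·S_ce, Δ₂ := S_ab·S_ce − S_ac·S_be − S_ae·S_bc, Δ₃ := S_ae·S_bc − S_ac·S_be − S_ab·S_ce. Then a,b,c,e are cocyclic if and only if Δ₁ = 0 or Δ₂ = 0 or Δ₃ = 0. -/

import Mathlib

/-!
Lift each point `x` to `(1, x) ∈ ℝ⁴` and let `M` be the `4 × 4` matrix of the lifted points. A
nonzero kernel vector `(λ, w)` of `M` says `w · x = -λ` at the four points: for `λ ≠ 0` this is a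
plane missing the origin, for `λ = 0` the points are collinear. So non-collinear points are
cocyclic iff `det M = 0`. With `η = diag(-1, 1, -1, -1)` one has
`M η Mᵀ = (⟨xᵢ, xⱼ⟩ - 1) = (2 S_{ij}²)`, hence `det M ^ 2 = -16 · det (S_{ij}²)`, and this
zero-diagonal determinant factors, like a Cayley–Menger determinant, into the three Ptolemy
expressions times `S_ac S_be + S_ae S_bc + S_ab S_ce`, a sum of nonnegative terms that vanishes
only together with the first of them.
-/

open Real Finset

noncomputable section

/-- Points of `ℝ³`. -/
abbrev V3 : Type := Fin 3 → ℝ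

/-- The pseudo-Euclidean scalar product `⟨x,y⟩ = x₀y₀ − x₁y₁ − x₂y₂`. -/
def pscal (x y : V3) : ℝ := x 0 * y 0 - x 1 * y 1 - x 2 * y 2

/-- The hyperboloid model `ℍ` of the hyperbolic plane. -/
def Hyp : Set V3 := {x | pscal x x = 1 ∧ 0 < x 0}

/-- Inverse hyperbolic cosine. -/
def arcoshR (x : ℝ) : ℝ := Real.log (x + Real.sqrt (x ^ 2 - 1))

/-- Hyperbolic distance `d(a,b) = arcosh ⟨a,b⟩`. -/
def dH (a b : V3) : ℝ := arcoshR (pscal a b)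

/-- Determinant of the 3×3 matrix with columns `a`, `b`, `c`. -/
def det3 (a b c : V3) : ℝ :=
  a 0 * (b 1 * c 2 - b 2 * c 1) - b 0 * (a 1 * c 2 - a 2 * c 1) + c 0 * (a 1 * b 2 - a 2 * b 1)

/-- `S_ab = sinh(d(a,b)/2)`. -/
def SS (a b : V3) : ℝ := Real.sinh (dH a b / 2)

/-- Signed area of the triangle `a b c`. -/
def triArea (a b c : V3) : ℝ :=
  2 * Real.arctan (det3 a b c / (pscal a b + pscal b c + pscal c a + 1))

/-- Signed area of the `n`-gon with vertices `z 1, …, z n`. -/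
def polyArea (n : ℕ) (z : ℕ → V3) : ℝ :=
  ∑ k ∈ Finset.Ico 2 n, triArea (z 1) (z k) (z (k + 1))

/-- Cyclic successor on `{1, …, n}`. -/
def nxt (n k : ℕ) : ℕ := k % n + 1

/-- Oriented convexity of the `n`-gon `z 1, …, z n`. -/
def OrientedConvex (n : ℕ) (z : ℕ → V3) : Prop :=
  ∀ k ∈ Finset.Icc 1 n, ∀ j ∈ Finset.Icc 1 n,
    j ≠ k → j ≠ nxt n k → 0 < det3 (z k) (z (nxt n k)) (z j)

/-- A set of points lies in a common 2-dimensional linear subspace of `ℝ³`. -/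
def Collin (s : Set V3) : Prop :=
  ∃ W : Submodule ℝ V3, Module.finrank ℝ W = 2 ∧ ∀ x ∈ s, x ∈ W

/-- A set of points lies in a common affine plane of `ℝ³` not containing the origin. -/
def Cocyc (s : Set V3) : Prop :=
  ∃ u : V3, ∃ p : ℝ, u ≠ 0 ∧ p ≠ 0 ∧ ∀ x ∈ s, pscal u x = p

open Matrix

lemma one_le_pscal {a b : V3} (ha : a ∈ Hyp) (hb : b ∈ Hyp) : 1 ≤ pscal a b := by
  obtain ⟨ha1, ha0⟩ := ha
  obtain ⟨hb1, hb0⟩ := hb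
  simp only [pscal] at *
  nlinarith [sq_nonneg (a 1 - b 1), sq_nonneg (a 2 - b 2), sq_nonneg (a 1 * b 2 - a 2 * b 1),
    mul_pos ha0 hb0, sq_nonneg (a 0 - b 0), sq_nonneg (a 0 * b 0 - 1)]

lemma pscal_comm (x y : V3) : pscal x y = pscal y x := by
  simp only [pscal]; ring

lemma cosh_arcoshR {x : ℝ} (hx : 1 ≤ x) : cosh (arcoshR x) = x := by
  have hs : √(x ^ 2 - 1) ^ 2 = x ^ 2 - 1 := sq_sqrt (by nlinarith)
  have hpos : 0 < x + √(x ^ 2 - 1) := by positivity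
  rw [arcoshR, cosh_eq, exp_neg, exp_log hpos]
  field_simp
  nlinarith [hs]

lemma arcoshR_nonneg {x : ℝ} (hx : 1 ≤ x) : 0 ≤ arcoshR x :=
  log_nonneg (by linarith [sqrt_nonneg (x ^ 2 - 1)])

lemma SS_nonneg {a b : V3} (ha : a ∈ Hyp) (hb : b ∈ Hyp) : 0 ≤ SS a b :=
  sinh_nonneg_iff.2 (div_nonneg (arcoshR_nonneg (one_le_pscal ha hb)) zero_le_two)

lemma SS_comm (a b : V3) : SS a b = SS b a := by
  rw [SS, SS, dH, dH, pscal_comm]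

lemma pscal_eq_one_add_two_mul_SS_sq {a b : V3} (ha : a ∈ Hyp) (hb : b ∈ Hyp) :
    pscal a b = 1 + 2 * SS a b ^ 2 := by
  have hcosh : cosh (dH a b) = pscal a b := cosh_arcoshR (one_le_pscal ha hb)
  obtain ⟨y, hy⟩ : ∃ y, dH a b = 2 * y := ⟨dH a b / 2, by ring⟩
  rw [SS, ← hcosh, hy, mul_div_cancel_left₀ y two_ne_zero, cosh_two_mul, cosh_sq]
  ring

lemma SS_self {a : V3} (ha : a ∈ Hyp) : SS a a = 0 := by
  have h := pscal_eq_one_add_two_mul_SS_sq ha ha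
  rw [ha.1] at h
  nlinarith [sq_nonneg (SS a a)]

def homogMatrix (x : Fin 4 → V3) : Matrix (Fin 4) (Fin 4) ℝ := of fun i => vecCons 1 (x i)

lemma homogMatrix_mulVec_apply (x : Fin 4 → V3) (v : Fin 4 → ℝ) (i : Fin 4) :
    (homogMatrix x *ᵥ v) i = v 0 + vecTail v ⬝ᵥ x i := by
  simp [homogMatrix, mulVec, vecHead, dotProduct_comm]

lemma collin_of_dotProduct_eq_zero {s : Set V3} {w : V3} (hw : w ≠ 0)
    (h : ∀ x ∈ s, w ⬝ᵥ x = 0) : Collin s := by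
  have hf : dotProductEquiv ℝ (Fin 3) w ≠ 0 := by simpa using hw
  refine ⟨LinearMap.ker (dotProductEquiv ℝ (Fin 3) w), ?_, fun x hx => by simpa using h x hx⟩
  have := Module.Dual.finrank_ker_add_one_of_ne_zero hf
  rw [Module.finrank_fin_fun] at this
  exact Nat.add_right_cancel (m := 1) this

lemma det_homogMatrix_eq_zero_of_cocyc {x : Fin 4 → V3} (h : Cocyc (Set.range x)) :
    (homogMatrix x).det = 0 := by
  obtain ⟨u, p, -, hp, hux⟩ := h
  refine exists_mulVec_eq_zero_iff.mp ⟨![-p, u 0, -u 1, -u 2], fun h0 => hp ?_, ?_⟩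
  · simpa using congrFun h0 0
  · ext i
    have := hux (x i) ⟨i, rfl⟩
    simp only [homogMatrix_mulVec_apply, pscal] at this ⊢
    simp only [dotProduct, Fin.sum_univ_three, tail_cons, cons_val_zero, cons_val_one,
      Matrix.cons_val, Pi.zero_apply]
    linarith

lemma cocyc_or_collin_of_det_homogMatrix_eq_zero {x : Fin 4 → V3} (h : (homogMatrix x).det = 0) :
    Cocyc (Set.range x) ∨ Collin (Set.range x) := by
  obtain ⟨v, hv, hvx⟩ := exists_mulVec_eq_zero_iff.mpr h
  have hrow (i : Fin 4) : v 0 + vecTail v ⬝ᵥ x i = 0 := by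
    rw [← homogMatrix_mulVec_apply, hvx, Pi.zero_apply]
  by_cases h0 : v 0 = 0
  · right
    refine collin_of_dotProduct_eq_zero (w := vecTail v) (fun ht => hv ?_) ?_
    · ext i
      exact Fin.cases h0 (fun j => congrFun ht j) i
    · rintro _ ⟨i, rfl⟩
      simpa [h0] using hrow i
  · left
    have hpscal (y : V3) : pscal ![v 1, -v 2, -v 3] y = vecTail v ⬝ᵥ y := by
      simp only [pscal, Fin.isValue, cons_val_zero, cons_val_one, neg_mul, sub_neg_eq_add,
        Matrix.cons_val, dotProduct, vecTail, Nat.succ_eq_add_one, Nat.reduceAdd, Function.comp_apply,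
        Fin.sum_univ_three, Fin.succ_zero_eq_one, Fin.succ_one_eq_two, Fin.reduceSucc]
    refine ⟨![v 1, -v 2, -v 3], -v 0, fun hu => h0 ?_, neg_ne_zero.2 h0, ?_⟩
    · have h := hpscal (x 0)
      simp only [hu, pscal, Pi.zero_apply, zero_mul, sub_zero] at h
      linarith [hrow 0]
    · rintro _ ⟨i, rfl⟩
      linarith [hpscal (x i), hrow i]

lemma cocyc_iff_det_homogMatrix_eq_zero {x : Fin 4 → V3} (hx : ¬ Collin (Set.range x)) :
    Cocyc (Set.range x) ↔ (homogMatrix x).det = 0 :=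
  ⟨det_homogMatrix_eq_zero_of_cocyc,
    fun h => (cocyc_or_collin_of_det_homogMatrix_eq_zero h).resolve_right hx⟩

lemma homogMatrix_mul_diagonal_mul_transpose (x : Fin 4 → V3) :
    homogMatrix x * diagonal ![-1, 1, -1, -1] * (homogMatrix x)ᵀ =
      of fun i j => pscal (x i) (x j) - 1 := by
  ext i j
  simp only [Nat.succ_eq_add_one, Nat.reduceAdd, homogMatrix, mul_apply, of_apply, Fin.sum_univ_four,
    Fin.isValue, cons_val_zero, one_mul, cons_val_one, Matrix.cons_val, transpose_apply,
    diagonal_apply_eq, ne_eq, one_ne_zero, not_false_eq_true, diagonal_apply_ne, mul_zero, add_zero,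
    Fin.reduceEq, mul_one, zero_ne_one, zero_add, mul_neg, neg_mul, pscal]
  ring

lemma det_pscal_sub_one (x : Fin 4 → V3) :
    (of fun i j => pscal (x i) (x j) - 1).det = -(homogMatrix x).det ^ 2 := by
  rw [← homogMatrix_mul_diagonal_mul_transpose, det_mul, det_mul, det_transpose, det_diagonal]
  simp only [Nat.succ_eq_add_one, Nat.reduceAdd, Fin.prod_univ_four, Fin.isValue, cons_val_zero,
    cons_val_one, mul_one, Matrix.cons_val, mul_neg, neg_neg, neg_mul, neg_inj]
  ring

lemma det_ptolemy (p q r s t u : ℝ) :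
    !![0, p ^ 2, q ^ 2, r ^ 2; p ^ 2, 0, s ^ 2, t ^ 2; q ^ 2, s ^ 2, 0, u ^ 2;
      r ^ 2, t ^ 2, u ^ 2, 0].det =
      (q * t + r * s + p * u) * (q * t - r * s - p * u) * (p * u - q * t - r * s) *
        (r * s - q * t - p * u) := by
  rw [det_succ_row_zero]
  simp only [Fin.sum_univ_four, det_fin_three, submatrix_apply, of_apply, Fin.succAbove,
    Fin.isValue, Fin.reduceSucc, Fin.reduceCastSucc, Fin.reduceLT, ↓reduceIte, Matrix.cons_val,
    Fin.coe_ofNat_eq_mod, Fin.castSucc_zero, Fin.castSucc_one, Fin.succ_zero_eq_one,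
    Fin.succ_one_eq_two, lt_self_iff_false, not_lt_zero]
  ring

lemma sq_det_homogMatrix {a b c e : V3} (ha : a ∈ Hyp) (hb : b ∈ Hyp) (hc : c ∈ Hyp)
    (he : e ∈ Hyp) :
    (homogMatrix ![a, b, c, e]).det ^ 2 =
      -16 * ((SS a c * SS b e + SS a e * SS b c + SS a b * SS c e) *
        (SS a c * SS b e - SS a e * SS b c - SS a b * SS c e) *
        (SS a b * SS c e - SS a c * SS b e - SS a e * SS b c) *
        (SS a e * SS b c - SS a c * SS b e - SS a b * SS c e)) := by
  have hgram : (of fun i j => pscal (![a, b, c, e] i) (![a, b, c, e] j) - 1) =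
      (2 : ℝ) • !![0, SS a b ^ 2, SS a c ^ 2, SS a e ^ 2; SS a b ^ 2, 0, SS b c ^ 2, SS b e ^ 2;
        SS a c ^ 2, SS b c ^ 2, 0, SS c e ^ 2; SS a e ^ 2, SS b e ^ 2, SS c e ^ 2, 0] := by
    ext i j
    fin_cases i <;> fin_cases j <;>
      simp [pscal_eq_one_add_two_mul_SS_sq, SS_self, SS_comm, ha, hb, hc, he]
  have := det_pscal_sub_one ![a, b, c, e]
  rw [hgram, det_smul, det_ptolemy] at this
  simp only [Fintype.card_fin] at this
  linarith

lemma det_homogMatrix_eq_zero_iff {a b c e : V3} (ha : a ∈ Hyp) (hb : b ∈ Hyp) (hc : c ∈ Hyp)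
    (he : e ∈ Hyp) :
    (homogMatrix ![a, b, c, e]).det = 0 ↔
      (SS a c * SS b e - SS a e * SS b c - SS a b * SS c e = 0 ∨
       SS a b * SS c e - SS a c * SS b e - SS a e * SS b c = 0 ∨
       SS a e * SS b c - SS a c * SS b e - SS a b * SS c e = 0) := by
  have hsum : SS a c * SS b e + SS a e * SS b c + SS a b * SS c e = 0 →
      SS a c * SS b e - SS a e * SS b c - SS a b * SS c e = 0 := by
    intro h
    linarith [mul_nonneg (SS_nonneg ha hc) (SS_nonneg hb he),
      mul_nonneg (SS_nonneg ha he) (SS_nonneg hb hc), mul_nonneg (SS_nonneg ha hb) (SS_nonneg hc he)]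
  rw [← pow_eq_zero_iff two_ne_zero, sq_det_homogMatrix ha hb hc he]
  simp only [mul_eq_zero, neg_eq_zero, OfNat.ofNat_ne_zero, false_or]
  tauto

/-- Corollary 3.5 (Ptolemy characterization of cocyclicity): four non-collinear points
of `ℍ` are cocyclic iff one of the Ptolemy expressions vanishes. -/
theorem ptolemy_cocyclic (a b c e : V3)
    (ha : a ∈ Hyp) (hb : b ∈ Hyp) (hc : c ∈ Hyp) (he : e ∈ Hyp)
    (hnc : ¬ Collin {a, b, c, e}) :
    Cocyc {a, b, c, e} ↔
      (SS a c * SS b e - SS a e * SS b c - SS a b * SS c e = 0 ∨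
       SS a b * SS c e - SS a c * SS b e - SS a e * SS b c = 0 ∨
       SS a e * SS b c - SS a c * SS b e - SS a b * SS c e = 0) := by
  have hrange : Set.range ![a, b, c, e] = {a, b, c, e} := by
    simp only [range_cons, range_empty, Set.union_empty, Set.singleton_union]
  rw [← hrange] at hnc ⊢
  rw [cocyc_iff_det_homogMatrix_eq_zero hnc, det_homogMatrix_eq_zero_iff ha hb hc he]
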